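/- Suppose Eᵢ ≠ 0 for every i = 1,…,N, and write CVᵢ² = Vᵢ/Eᵢ² for the squared coefficient of variation. Then the variance of the marginal estimator equals Var(Î_M) = (∏_{i=1}^N Eᵢ²) · ( ∏_{i=1}^N (CVᵢ²/R + 1) − 1 ). -/

import Mathlib

/-!
The sample means `Zᵢ = R⁻¹ ∑ᵣ Yᵢᵣ` are independent across `i`, being functions of disjoint
blocks of the independent family `(Yᵢᵣ)`, and each has mean `Eᵢ` and variance `Vᵢ / R`.
For independent square-integrable factors, `E[(∏ Zᵢ)²] = ∏ E[Zᵢ²] = ∏ (Var Zᵢ + (E Zᵢ)²)`,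
so `Var(∏ Zᵢ) = ∏ (Vᵢ / R + Eᵢ²) - ∏ Eᵢ²`; factoring out `∏ Eᵢ²` gives the claim.
-/

open MeasureTheory ProbabilityTheory Finset

namespace ProbabilityTheory

variable {Ω : Type*} [MeasurableSpace Ω] {μ : Measure Ω}

lemma iIndepFun.curry {ι κ β : Type*} [MeasurableSpace β] {X : ι → κ → Ω → β}
    (mX : ∀ i j, Measurable (X i j)) (h : iIndepFun (fun p : ι × κ ↦ X p.1 p.2) μ) :
    iIndepFun (fun i ω j ↦ X i j ω) μ := by
  have := h.isProbabilityMeasure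
  have : ∀ i j, IsProbabilityMeasure (μ.map (X i j)) :=
    fun i j ↦ Measure.isProbabilityMeasure_map (mX i j).aemeasurable
  have mXp (p : ι × κ) : Measurable (X p.1 p.2) := mX p.1 p.2
  have hrow (i : ι) : μ.map (fun ω j ↦ X i j ω) = Measure.infinitePi fun j ↦ μ.map (X i j) :=
    (h.precomp (Prod.mk_right_injective i)).map_fun_eq_infinitePi_map (mX i)
  rw [iIndepFun_iff_map_fun_eq_infinitePi_map (fun i ↦ measurable_pi_lambda _ (mX i))]
  simp_rw [hrow]
  -- the law of the rows is the image under `curry` of the product law of all entries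
  rw [← Measure.infinitePi_map_curry, ← h.map_fun_eq_infinitePi_map mXp,
    Measure.map_map (by fun_prop) (measurable_pi_lambda _ mXp)]
  rfl

lemma iIndepFun.integrable_finset_prod {ι : Type*} {f : ι → Ω → ℝ} (h : iIndepFun f μ)
    (hf : ∀ i, Integrable (f i) μ) (s : Finset ι) : Integrable (fun ω ↦ ∏ i ∈ s, f i ω) μ := by
  classical
  have := h.isProbabilityMeasure
  induction s using Finset.induction_on with
  | empty => exact integrable_const 1
  | insert i s hi ih =>
    simp_rw [prod_insert hi, mul_comm (f i _)]
    have hindep := h.indepFun_finsetProd_of_notMem₀ (fun j ↦ (hf j).aemeasurable) hi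
    simpa only [Pi.mul_def, prod_apply] using
      hindep.integrable_mul (by simpa only [prod_fn] using ih) (hf i)

lemma iIndepFun.variance_prod {ι : Type*} [Fintype ι] {Z : ι → Ω → ℝ} (h : iIndepFun Z μ)
    (hZ : ∀ i, MemLp (Z i) 2 μ) :
    variance (fun ω ↦ ∏ i, Z i ω) μ
      = ∏ i, (variance (Z i) μ + μ[Z i] ^ 2) - ∏ i, μ[Z i] ^ 2 := by
  have := h.isProbabilityMeasure
  have hsq : iIndepFun (fun i ω ↦ Z i ω ^ 2) μ := h.comp (fun _ x ↦ x ^ 2) fun _ ↦ by fun_prop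
  have hprod : MemLp (fun ω ↦ ∏ i, Z i ω) 2 μ := by
    rw [memLp_two_iff_integrable_sq (aestronglyMeasurable_fun_prod univ fun i _ ↦ (hZ i).1)]
    simpa only [prod_pow] using hsq.integrable_finset_prod (fun i ↦ (hZ i).integrable_sq) univ
  have hmoment (i : ι) : ∫ ω, Z i ω ^ 2 ∂μ = variance (Z i) μ + μ[Z i] ^ 2 := by
    rw [variance_eq_sub (hZ i)]; simp
  rw [variance_eq_sub hprod]
  simp only [Pi.pow_apply, ← prod_pow]
  rw [hsq.integral_fun_prod_eq_prod_integral fun i ↦ (hZ i).1.pow 2,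
    h.integral_fun_prod_eq_prod_integral fun i ↦ (hZ i).1, prod_pow]
  simp only [hmoment]

section SampleMean

variable {κ Ω' : Type*} [Fintype κ] [MeasurableSpace Ω'] {ν : Measure Ω'}
  {Y : κ → Ω → ℝ} {X : Ω' → ℝ}

lemma integral_sampleMean [Nonempty κ] (hY : ∀ r, IdentDistrib (Y r) X μ ν)
    (hX : Integrable X ν) :
    ∫ ω, (Fintype.card κ : ℝ)⁻¹ * ∑ r, Y r ω ∂μ = ∫ ω, X ω ∂ν := by
  rw [integral_const_mul, integral_finsetSum _ fun r _ ↦ (hY r).integrable_iff.2 hX]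
  simp_rw [(hY _).integral_eq]
  simp

lemma variance_sampleMean (hY : ∀ r, IdentDistrib (Y r) X μ ν) (hX : MemLp X 2 ν)
    (hindep : Pairwise fun r s ↦ IndepFun (Y r) (Y s) μ) :
    variance (fun ω ↦ (Fintype.card κ : ℝ)⁻¹ * ∑ r, Y r ω) μ
      = variance X ν / Fintype.card κ := by
  have hYL2 (r : κ) : MemLp (Y r) 2 μ := (hY r).symm.memLp_snd hX
  rw [variance_const_mul, ← sum_fn, IndepFun.variance_sum (fun r _ ↦ hYL2 r)
    fun r _ s _ hrs ↦ hindep hrs]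
  simp_rw [(hY _).variance_eq]
  simp only [inv_pow, sum_const, card_univ, nsmul_eq_mul]
  field_simp

end SampleMean

end ProbabilityTheory

theorem variance_marginal_estimator_cv_general
    {Ω : Type*} [MeasurableSpace Ω] (μ : Measure Ω) [IsProbabilityMeasure μ]
    (N R : ℕ) (hR : 1 ≤ R)
    (X : Fin N → Ω → ℝ)
    (hXL2 : ∀ i, MemLp (X i) 2 μ)
    (Y : Fin N → Fin R → Ω → ℝ)
    (hYmeas : ∀ i r, Measurable (Y i r))
    (hYindep : iIndepFun
      (fun p : Fin N × Fin R => Y p.1 p.2) μ)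
    (hYdist : ∀ i r, IdentDistrib (Y i r) (X i) μ μ)
    (hE : ∀ i, (∫ ω, X i ω ∂μ) ≠ 0) :
    variance (fun ω => ∏ i, ((R : ℝ)⁻¹ * ∑ r, Y i r ω)) μ
      = (∏ i, (∫ ω, X i ω ∂μ) ^ 2) *
          ((∏ i, (variance (X i) μ / (∫ ω, X i ω ∂μ) ^ 2 / (R : ℝ) + 1)) - 1) := by
  have : Nonempty (Fin R) := ⟨⟨0, hR⟩⟩
  set Z : Fin N → Ω → ℝ := fun i ω ↦ (R : ℝ)⁻¹ * ∑ r, Y i r ω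
  have hZindep : iIndepFun Z μ :=
    (hYindep.curry hYmeas).comp (fun _ v ↦ (R : ℝ)⁻¹ * ∑ r, v r) fun _ ↦ by fun_prop
  have hZL2 (i : Fin N) : MemLp (Z i) 2 μ :=
    (memLp_finsetSum _ fun r _ ↦ (hYdist i r).symm.memLp_snd (hXL2 i)).const_mul _
  have hmean (i : Fin N) : μ[Z i] = ∫ ω, X i ω ∂μ := by
    simpa using integral_sampleMean (hYdist i) ((hXL2 i).integrable one_le_two)
  have hvar (i : Fin N) : variance (Z i) μ = variance (X i) μ / R := by
    simpa using variance_sampleMean (hYdist i) (hXL2 i)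
      fun r s hrs ↦ hYindep.indepFun (show ((i, r) : Fin N × Fin R) ≠ (i, s) by simpa using hrs)
  rw [hZindep.variance_prod hZL2]
  simp only [hmean, hvar]
  rw [mul_sub, mul_one, ← prod_mul_distrib]
  congr 1
  refine prod_congr rfl fun i _ ↦ ?_
  field_simp [hE i]

/-- If `Eᵢ ≠ 0` for all `i` and `CVᵢ² = Vᵢ/Eᵢ²`, then
`Var(Î_M) = (∏ᵢ Eᵢ²) · (∏ᵢ (CVᵢ²/R + 1) − 1)`. -/
theorem variance_marginal_estimator_cv
    {Ω : Type*} [MeasurableSpace Ω] (μ : Measure Ω) [IsProbabilityMeasure μ]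
    (N R : ℕ) (hN : 1 ≤ N) (hR : 1 ≤ R)
    (X : Fin N → Ω → ℝ)
    (hXmeas : ∀ i, Measurable (X i))
    (hXL2 : ∀ i, MemLp (X i) 2 μ)
    (hXindep : iIndepFun X μ)
    (Y : Fin N → Fin R → Ω → ℝ)
    (hYmeas : ∀ i r, Measurable (Y i r))
    (hYindep : iIndepFun
      (fun p : Fin N × Fin R => Y p.1 p.2) μ)
    (hYdist : ∀ i r, IdentDistrib (Y i r) (X i) μ μ)
    (hE : ∀ i, (∫ ω, X i ω ∂μ) ≠ 0) :
    variance (fun ω => ∏ i, ((R : ℝ)⁻¹ * ∑ r, Y i r ω)) μ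
      = (∏ i, (∫ ω, X i ω ∂μ) ^ 2) *
          ((∏ i, (variance (X i) μ / (∫ ω, X i ω ∂μ) ^ 2 / (R : ℝ) + 1)) - 1) :=
  variance_marginal_estimator_cv_general μ N R hR X hXL2 Y hYmeas hYindep hYdist hE
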